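/- Let r, s ≥ 1. Define the generalized Whitney map f^w : M(r×s, ℂ) → M((2r−1)×(2s−1), ℂ) as follows: for Z = (z_{ij}), the entry of f^w(Z) in row i (1 ≤ i ≤ r) and column j is z_{i1} z_{1j} for 1 ≤ j ≤ s, and is z_{i,j−s+1} for s+1 ≤ j ≤ 2s−1; the entry in row r+i−1 (2 ≤ i ≤ r) and column j is z_{ij} for 1 ≤ j ≤ s, and is 0 for s+1 ≤ j ≤ 2s−1. Then f^w maps Ω_{r,s} into Ω_{2r−1,2s−1}, and the restriction f^w : Ω_{r,s} → Ω_{2r−1,2s−1} is a proper map, i.e., the preimage under f^w of every compact subset of Ω_{2r−1,2s−1} is compact. -/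

import Mathlib

open Matrix
open scoped ComplexOrder

/-!
Write `d_Z(x) = ‖x‖² - ‖Zᴴ x‖²`, so that `Z ∈ Ω` iff `d_Z(x) > 0` for every `x ≠ 0`. After
splitting the rows of `f^w(Z)` as `r + (r - 1)` and its columns as `s + (s - 1)`, it is the block
matrix `[[Z e₀ e₀ᵀ Z, Z without its first column], [Z without its first row, 0]]`, and a direct
computation gives, for `P = (x, y)`,
  `d_{f^w(Z)}(x, y) = d_Z(x) + d_Z((Zᴴ x)₀, y)`.
Hence `f^w(Z) ∈ Ω` iff `Z ∈ Ω`: if `d_Z` is positive so is the sum, and conversely a nonzero `x`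
with `d_Z(x) ≤ 0` gives `P = (x, c • tail x)` for a suitable `c` (or `P = (0, tail x)` if
`x₀ = 0`) with `d_{f^w(Z)}(P) ≤ 0`. So the preimage of a compact `K ⊆ Ω` is the closed set
`(f^w)⁻¹(K)`, which lies in the compact set `{Z | 1 - Z Zᴴ ≥ 0}`.
-/

/-- The type I bounded symmetric domain `Ω_{r,s}`. -/
def OmegaI (r s : ℕ) : Set (Matrix (Fin r) (Fin s) ℂ) :=
  {Z | (1 - Z * Zᴴ).PosDef}

namespace Matrix

section Reindex

variable {m n m' n' : Type*} [Fintype n] [Fintype n'] [DecidableEq m] [DecidableEq m']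

lemma isHermitian_one_sub_mul_conjTranspose (Z : Matrix m n ℂ) : (1 - Z * Zᴴ).IsHermitian :=
  isHermitian_one.sub (isHermitian_mul_conjTranspose_self Z)

lemma posDef_one_sub_submatrix_mul_conjTranspose_iff (Z : Matrix m n ℂ) (e₁ : m' ≃ m)
    (e₂ : n' ≃ n) :
    (1 - Z.submatrix e₁ e₂ * (Z.submatrix e₁ e₂)ᴴ).PosDef ↔ (1 - Z * Zᴴ).PosDef := by
  rw [conjTranspose_submatrix, submatrix_mul_equiv, ← submatrix_one_equiv e₁]
  change ((1 - Z * Zᴴ).submatrix e₁ e₁).PosDef ↔ _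
  exact ⟨fun h => by simpa using h.submatrix e₁.symm.injective, fun h => h.submatrix e₁.injective⟩

end Reindex

section Defect

variable {m n : Type*} [Fintype m] [Fintype n]

noncomputable def contractionDefect (Z : Matrix m n ℂ) (x : m → ℂ) : ℝ :=
  ∑ i, Complex.normSq (x i) - ∑ j, Complex.normSq ((Zᴴ *ᵥ x) j)

lemma contractionDefect_zero_right (Z : Matrix m n ℂ) : contractionDefect Z 0 = 0 := by
  simp [contractionDefect]

lemma contractionDefect_smul (Z : Matrix m n ℂ) (c : ℂ) (x : m → ℂ) :
    contractionDefect Z (c • x) = Complex.normSq c * contractionDefect Z x := by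
  simp only [contractionDefect, mulVec_smul, Pi.smul_apply, smul_eq_mul, Complex.normSq_mul,
    mul_sub, Finset.mul_sum]

lemma contractionDefect_nonneg_of_pos {Z : Matrix m n ℂ}
    (hZ : ∀ x, x ≠ 0 → 0 < contractionDefect Z x) (x : m → ℂ) : 0 ≤ contractionDefect Z x := by
  rcases eq_or_ne x 0 with rfl | hx
  · exact (contractionDefect_zero_right Z).ge
  · exact (hZ x hx).le

lemma continuous_contractionDefect_left (x : m → ℂ) :
    Continuous fun Z : Matrix m n ℂ => contractionDefect Z x := by
  unfold contractionDefect
  fun_prop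

variable [DecidableEq m]

lemma dotProduct_one_sub_mul_conjTranspose_mulVec (Z : Matrix m n ℂ) (x : m → ℂ) :
    star x ⬝ᵥ ((1 - Z * Zᴴ) *ᵥ x) = (contractionDefect Z x : ℂ) := by
  have hstar : star x ᵥ* Z = star (Zᴴ *ᵥ x) := by
    rw [star_mulVec, conjTranspose_conjTranspose]
  rw [sub_mulVec, dotProduct_sub, one_mulVec, ← mulVec_mulVec, dotProduct_mulVec, hstar]
  simp [contractionDefect, dotProduct, Complex.normSq_eq_conj_mul_self]

lemma posDef_one_sub_mul_conjTranspose_iff (Z : Matrix m n ℂ) :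
    (1 - Z * Zᴴ).PosDef ↔ ∀ x, x ≠ 0 → 0 < contractionDefect Z x := by
  simp only [posDef_iff_dotProduct_mulVec, dotProduct_one_sub_mul_conjTranspose_mulVec,
    Complex.zero_lt_real, isHermitian_one_sub_mul_conjTranspose, true_and]

lemma posSemidef_one_sub_mul_conjTranspose_iff (Z : Matrix m n ℂ) :
    (1 - Z * Zᴴ).PosSemidef ↔ ∀ x, 0 ≤ contractionDefect Z x := by
  simp only [posSemidef_iff_dotProduct_mulVec, dotProduct_one_sub_mul_conjTranspose_mulVec,
    Complex.zero_le_real, isHermitian_one_sub_mul_conjTranspose, true_and]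

lemma norm_apply_le_one_of_posSemidef {Z : Matrix m n ℂ} (hZ : (1 - Z * Zᴴ).PosSemidef)
    (i : m) (j : n) : ‖Z i j‖ ≤ 1 := by
  rw [← sq_le_one_iff₀ (norm_nonneg _), Complex.sq_norm]
  have h := (posSemidef_one_sub_mul_conjTranspose_iff Z).1 hZ (Pi.single i 1)
  simp only [contractionDefect, Pi.single_apply, MonoidWithZeroHom.map_ite_one_zero,
    Finset.sum_ite_eq', Finset.mem_univ, ↓reduceIte, mulVec_single, MulOpposite.op_one,
    Pi.smul_apply, col_apply, conjTranspose_apply, RCLike.star_def, one_smul,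
    Complex.normSq_conj, sub_nonneg] at h
  exact (Finset.single_le_sum (fun k _ => Complex.normSq_nonneg (Z i k))
    (Finset.mem_univ j)).trans h

lemma isCompact_setOf_posSemidef_one_sub_mul_conjTranspose :
    IsCompact {Z : Matrix m n ℂ | (1 - Z * Zᴴ).PosSemidef} := by
  have hclosed : IsClosed {Z : Matrix m n ℂ | (1 - Z * Zᴴ).PosSemidef} := by
    simp only [posSemidef_one_sub_mul_conjTranspose_iff, Set.ofPred_forall]
    exact isClosed_iInter fun x =>
      isClosed_le continuous_const (continuous_contractionDefect_left x)
  have hbox : IsCompact (Set.univ.pi fun _ : m => Set.univ.pi fun _ : n =>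
      Metric.closedBall (0 : ℂ) 1) :=
    isCompact_univ_pi fun _ => isCompact_univ_pi fun _ => isCompact_closedBall 0 1
  refine hbox.of_isClosed_subset hclosed fun Z hZ i _ j _ => ?_
  rw [mem_closedBall_zero_iff]
  exact norm_apply_le_one_of_posSemidef hZ i j

end Defect

section Whitney

variable {m n : ℕ}

def whitney (Z : Matrix (Fin (m + 1)) (Fin (n + 1)) ℂ) :
    Matrix (Fin (m + 1) ⊕ Fin m) (Fin (n + 1) ⊕ Fin n) ℂ :=
  fromBlocks (vecMulVec (fun i => Z i 0) (Z 0)) (Z.submatrix id Fin.succ)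
    (Z.submatrix Fin.succ id) 0

lemma continuous_whitney :
    Continuous (whitney : Matrix (Fin (m + 1)) (Fin (n + 1)) ℂ → _) := by
  unfold whitney
  fun_prop

lemma whitney_conjTranspose_mulVec (Z : Matrix (Fin (m + 1)) (Fin (n + 1)) ℂ)
    (x : Fin (m + 1) → ℂ) (y : Fin m → ℂ) :
    (whitney Z)ᴴ *ᵥ Sum.elim x y =
      Sum.elim (Zᴴ *ᵥ vecCons ((Zᴴ *ᵥ x) 0) y) (vecTail (Zᴴ *ᵥ x)) := by
  rw [whitney, fromBlocks_conjTranspose, fromBlocks_mulVec]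
  congr 1
  · ext j
    simp [mulVec, dotProduct, Fin.sum_univ_succ, vecMulVec_apply, mul_assoc, mul_add,
      Finset.mul_sum]
  · ext j
    simp [mulVec, dotProduct, vecTail]

lemma contractionDefect_whitney (Z : Matrix (Fin (m + 1)) (Fin (n + 1)) ℂ)
    (x : Fin (m + 1) → ℂ) (y : Fin m → ℂ) :
    contractionDefect (whitney Z) (Sum.elim x y) =
      contractionDefect Z x + contractionDefect Z (vecCons ((Zᴴ *ᵥ x) 0) y) := by
  simp only [contractionDefect, whitney_conjTranspose_mulVec, Fintype.sum_sum_type, Sum.elim_inl,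
    Sum.elim_inr, Fin.sum_univ_succ, cons_val_zero, cons_val_succ, vecTail, Function.comp_apply]
  ring

lemma contractionDefect_whitney_pos {Z : Matrix (Fin (m + 1)) (Fin (n + 1)) ℂ}
    (hZ : ∀ x, x ≠ 0 → 0 < contractionDefect Z x) {P : Fin (m + 1) ⊕ Fin m → ℂ} (hP : P ≠ 0) :
    0 < contractionDefect (whitney Z) P := by
  rw [← Sum.elim_comp_inl_inr P, contractionDefect_whitney]
  by_cases hx : P ∘ Sum.inl = 0
  · have hy : vecCons ((Zᴴ *ᵥ (P ∘ Sum.inl)) 0) (P ∘ Sum.inr) ≠ 0 := by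
      rw [Ne, cons_eq_zero_iff, not_and_or]
      refine Or.inr fun hy => hP ?_
      rw [← Sum.elim_comp_inl_inr P, hx, hy, Sum.elim_zero_zero]
    exact add_pos_of_nonneg_of_pos (contractionDefect_nonneg_of_pos hZ _) (hZ _ hy)
  · exact add_pos_of_pos_of_nonneg (hZ _ hx) (contractionDefect_nonneg_of_pos hZ _)

lemma exists_contractionDefect_whitney_nonpos {Z : Matrix (Fin (m + 1)) (Fin (n + 1)) ℂ}
    {x : Fin (m + 1) → ℂ} (hx : x ≠ 0) (hZx : contractionDefect Z x ≤ 0) :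
    ∃ P, P ≠ 0 ∧ contractionDefect (whitney Z) P ≤ 0 := by
  by_cases hx₀ : x 0 = 0
  · refine ⟨Sum.elim 0 (vecTail x), fun hP => hx ?_, ?_⟩
    · rw [← cons_head_tail x, cons_eq_zero_iff]
      exact ⟨hx₀, congrArg (· ∘ Sum.inr) hP⟩
    · have hcons : vecCons ((Zᴴ *ᵥ 0) 0) (vecTail x) = x := by
        rw [mulVec_zero, Pi.zero_apply, ← hx₀]
        exact cons_head_tail x
      rwa [contractionDefect_whitney, hcons, contractionDefect_zero_right, zero_add]
  · -- `c` is chosen so that the second vector in `contractionDefect_whitney` is `c • x`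
    set c := (Zᴴ *ᵥ x) 0 / x 0
    refine ⟨Sum.elim x (c • vecTail x), fun hP => hx (congrArg (· ∘ Sum.inl) hP), ?_⟩
    have hcons : vecCons ((Zᴴ *ᵥ x) 0) (c • vecTail x) = c • x := by
      rw [← cons_head_tail (c • x)]
      congr 1
      exact (div_mul_cancel₀ _ hx₀).symm
    rw [contractionDefect_whitney, hcons, contractionDefect_smul]
    nlinarith [Complex.normSq_nonneg c]

lemma posDef_one_sub_whitney_mul_conjTranspose_iff (Z : Matrix (Fin (m + 1)) (Fin (n + 1)) ℂ) :
    (1 - whitney Z * (whitney Z)ᴴ).PosDef ↔ (1 - Z * Zᴴ).PosDef := by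
  simp only [posDef_one_sub_mul_conjTranspose_iff]
  refine ⟨fun hW x hx => ?_, fun hZ _ hP => contractionDefect_whitney_pos hZ hP⟩
  by_contra! hZx
  obtain ⟨P, hP, hWP⟩ := exists_contractionDefect_whitney_nonpos hx hZx
  exact (hW P hP).not_ge hWP

end Whitney

end Matrix

/-- The generalized Whitney map `f^w : M(r×s,ℂ) → M((2r−1)×(2s−1),ℂ)`
(in the `0`-indexed description below: for row `I < r`, the entry in column `J < s` is
`Z I 0 * Z 0 J` and in column `J ≥ s` it is `Z I (J−s+1)`; for row `I ≥ r`, the entry in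
column `J < s` is `Z (I−r+1) J` and in column `J ≥ s` it is `0`) maps `Ω_{r,s}` into
`Ω_{2r−1,2s−1}` and is proper: preimages of compact subsets of `Ω_{2r−1,2s−1}` are
compact. -/
theorem statement18 (r s : ℕ) (hr : 1 ≤ r) (hs : 1 ≤ s)
    (f : Matrix (Fin r) (Fin s) ℂ → Matrix (Fin (2 * r - 1)) (Fin (2 * s - 1)) ℂ)
    (hf : ∀ (Z : Matrix (Fin r) (Fin s) ℂ) (I : Fin (2 * r - 1)) (J : Fin (2 * s - 1)),
      f Z I J =
        if hI : (I : ℕ) < r then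
          if hJ : (J : ℕ) < s then
            Z ⟨I, hI⟩ ⟨0, hs⟩ * Z ⟨0, hr⟩ ⟨J, hJ⟩
          else
            Z ⟨I, hI⟩ ⟨(J : ℕ) - s + 1, by have := J.isLt; omega⟩
        else
          if hJ : (J : ℕ) < s then
            Z ⟨(I : ℕ) - r + 1, by have := I.isLt; omega⟩ ⟨J, hJ⟩
          else 0) :
    (∀ Z ∈ OmegaI r s, f Z ∈ OmegaI (2 * r - 1) (2 * s - 1)) ∧
    ∀ K : Set (Matrix (Fin (2 * r - 1)) (Fin (2 * s - 1)) ℂ),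
      K ⊆ OmegaI (2 * r - 1) (2 * s - 1) → IsCompact K →
      IsCompact {Z | Z ∈ OmegaI r s ∧ f Z ∈ K} := by
  obtain ⟨m, rfl⟩ : ∃ m, r = m + 1 := ⟨r - 1, by omega⟩
  obtain ⟨n, rfl⟩ : ∃ n, s = n + 1 := ⟨s - 1, by omega⟩
  let eR : Fin (m + 1) ⊕ Fin m ≃ Fin (2 * (m + 1) - 1) := finSumFinEquiv.trans (finCongr (by omega))
  let eS : Fin (n + 1) ⊕ Fin n ≃ Fin (2 * (n + 1) - 1) := finSumFinEquiv.trans (finCongr (by omega))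
  have hfw : ∀ Z, f Z = (whitney Z).submatrix eR.symm eS.symm := by
    intro Z
    ext I J
    obtain ⟨p, rfl⟩ := eR.surjective I
    obtain ⟨q, rfl⟩ := eS.surjective J
    rw [hf, submatrix_apply, eR.symm_apply_apply, eS.symm_apply_apply]
    have hlt (a b : ℕ) : ¬ a + 1 + b ≤ a := by omega
    rcases p with i | i <;> rcases q with j | j <;>
      simp only [eR, eS, Equiv.trans_apply, finSumFinEquiv_apply_left, finSumFinEquiv_apply_right,
        finCongr_apply, Fin.val_cast, Fin.val_castAdd, Fin.val_natAdd, Order.lt_add_one_iff,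
        Fin.is_le, hlt, ↓reduceDIte, add_tsub_cancel_left, Fin.eta, Fin.zero_eta, whitney,
        fromBlocks_apply₁₁, fromBlocks_apply₁₂, fromBlocks_apply₂₁, fromBlocks_apply₂₂,
        vecMulVec_apply, submatrix_apply, id_eq, Matrix.zero_apply] <;> rfl
  have hmem (Z) : f Z ∈ OmegaI _ _ ↔ Z ∈ OmegaI _ _ := by
    rw [hfw]
    exact (posDef_one_sub_submatrix_mul_conjTranspose_iff _ _ _).trans
      (posDef_one_sub_whitney_mul_conjTranspose_iff Z)
  have hcont : Continuous f := by
    rw [funext hfw]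
    exact continuous_whitney.matrix_submatrix _ _
  refine ⟨fun Z hZ => (hmem Z).2 hZ, fun K hK hKc => ?_⟩
  have hpre : {Z | Z ∈ OmegaI (m + 1) (n + 1) ∧ f Z ∈ K} = f ⁻¹' K :=
    Set.ext fun Z => ⟨And.right, fun hZ => ⟨(hmem Z).1 (hK hZ), hZ⟩⟩
  rw [hpre]
  exact isCompact_setOf_posSemidef_one_sub_mul_conjTranspose.of_isClosed_subset
    (hKc.isClosed.preimage hcont) fun Z hZ => ((hmem Z).1 (hK hZ)).posSemidef
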